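/- The number of connected components of the poset (≤_S, S_{2n}) of Schröder paths of length 2n is 2^n. -/

import Mathlib

/-- Steps: north `N = (0,1)`, east `E = (1,0)`, diagonal `D = (1,1)`. -/
inductive MStep : Type
  | N | E | D
  deriving DecidableEq

/-- The contribution of a step to the height `y - x` above the diagonal. -/
def MStep.hdiff : MStep → ℤ
  | .N => 1
  | .E => -1
  | .D => 0

/-- The total height change `y - x` along a word of steps. -/
def wsum (p : List MStep) : ℤ := (p.map MStep.hdiff).sum

/-- A (nonempty) Motzkin path: starts at the origin, never goes below the
diagonal `y = x`, and ends on the diagonal. -/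
def IsMotzkin (p : List MStep) : Prop :=
  p ≠ [] ∧ (∀ q, q <+: p → 0 ≤ wsum q) ∧ wsum p = 0

/-- A Dyck path is a Motzkin path with no diagonal step. -/
def IsDyck (p : List MStep) : Prop := IsMotzkin p ∧ MStep.D ∉ p

/-- A path is primitive if it touches the diagonal only at its endpoints. -/
def IsPrimitive (p : List MStep) : Prop :=
  IsMotzkin p ∧ ∀ q, q <+: p → q ≠ [] → q ≠ p → 0 < wsum q

/-- Covering relation for the Tamari-type order on Motzkin paths:
`Q` covers `P` iff `P = P₁·E·P₂·P₃` and `Q = P₁·P₂·E·P₃` with `P₂` a nonempty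
primitive Motzkin path. -/
def MCover (P Q : List MStep) : Prop :=
  ∃ P₁ P₂ P₃ : List MStep, IsMotzkin P₂ ∧ IsPrimitive P₂ ∧
    P = P₁ ++ [MStep.E] ++ P₂ ++ P₃ ∧ Q = P₁ ++ P₂ ++ [MStep.E] ++ P₃

/-- Covering relation of the Tamari order on Dyck paths. -/
def DCover (P Q : List MStep) : Prop :=
  ∃ P₁ P₂ P₃ : List MStep, IsDyck P₂ ∧ IsPrimitive P₂ ∧
    P = P₁ ++ [MStep.E] ++ P₂ ++ P₃ ∧ Q = P₁ ++ P₂ ++ [MStep.E] ++ P₃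

/-- The partial order `≤_M` on Motzkin paths. -/
def MLE : List MStep → List MStep → Prop := Relation.ReflTransGen MCover

/-- The Tamari order `≤_D` on Dyck paths. -/
def DLE : List MStep → List MStep → Prop := Relation.ReflTransGen DCover

/-- Heights of the diagonal steps along a path, starting from height `h`. -/
def clsFrom : List MStep → ℤ → List ℤ
  | [], _ => []
  | .N :: rest, h => clsFrom rest (h + 1)
  | .E :: rest, h => clsFrom rest h
  | .D :: rest, h => (h + 1) :: clsFrom rest (h + 1)

/-- The class of a Motzkin path: the sequence of heights (ending `y`-coordinates)
of its diagonal steps, in the order they occur. -/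
def cls (p : List MStep) : List ℤ := clsFrom p 0

/-- A path avoids `NNN` if it has no three consecutive north steps. -/
def AvoidsNNN (p : List MStep) : Prop := ¬ ([MStep.N, MStep.N, MStep.N] <:+: p)

/-- Callan's bijection `φ`: replace each factor `NE` by `D` and each factor
`NNE` by `N`, leaving remaining east steps unchanged. -/
def phi : List MStep → List MStep
  | [] => []
  | .N :: .N :: .E :: rest => .N :: phi rest
  | .N :: .E :: rest => .D :: phi rest
  | s :: rest => s :: phi rest

/-- The inverse of `φ`: replace each `D` by `NE` and each `N` by `NNE`. -/
def psi : List MStep → List MStep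
  | [] => []
  | .N :: rest => .N :: .N :: .E :: psi rest
  | .D :: rest => .N :: .E :: psi rest
  | .E :: rest => .E :: psi rest

/-- For each north step of the path (in order), record `N` if it is immediately
followed by an east step and `E` otherwise. -/
def typeRaw : List MStep → List MStep
  | [] => []
  | .N :: rest => (if rest.head? = some MStep.E then MStep.N else MStep.E) :: typeRaw rest
  | _ :: rest => typeRaw rest

/-- The type of a Dyck path of length `2n`: the word of length `n - 1` whose
`i`-th letter is `N` iff the `i`-th north step is immediately followed by an
east step (the letter of the last north step is dropped). -/
def typeW (p : List MStep) : List MStep := (typeRaw p).dropLast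

/-- `ds p` is the number of north steps of `p` that are neither immediately
preceded nor immediately followed by another north step. -/
def ds (p : List MStep) : ℕ :=
  ((Finset.range p.length).filter (fun i =>
    p[i]? = some MStep.N ∧ p[i + 1]? ≠ some MStep.N ∧
      (i = 0 ∨ p[i - 1]? ≠ some MStep.N))).card

/-- The number of contacts of a path with the diagonal `y = x` (lattice points
of the path lying on the diagonal, endpoints included). -/
def cont (p : List MStep) : ℕ :=
  ((Finset.range (p.length + 1)).filter (fun i => wsum (p.take i) = 0)).card


/-!
A cover moves one east step to the right, so the word of non-east steps of a path is an
invariant of its component; for a Schröder path of length `2n` it is a word of length `n`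
over `{N, D}`. Conversely, a path `P` with non-east word `w` is joined by covers to
`w ++ E^k`: while some `E` is immediately followed by a non-east step, moving that `E` past
the primitive path that starts right after it and ends at its first return to the height of
the `E`'s start is a cover, and it lowers the number of pairs (east step, later non-east
step). Hence the components are counted by the `2^n` words over `{N, D}` of length `n`.
-/

open List Relation

theorem MStep.neg_one_le_hdiff (s : MStep) : -1 ≤ s.hdiff := by
  cases s <;> decide

theorem MStep.hdiff_nonneg {s : MStep} (hs : s ≠ .E) : 0 ≤ s.hdiff := by
  cases s <;> simp_all [MStep.hdiff]

@[simp] theorem wsum_nil : wsum [] = 0 := rfl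

@[simp] theorem wsum_cons (s : MStep) (p : List MStep) : wsum (s :: p) = s.hdiff + wsum p := by
  simp [wsum]

@[simp] theorem wsum_append (p q : List MStep) : wsum (p ++ q) = wsum p + wsum q := by
  simp [wsum]

theorem wsum_eq_count_sub_count (p : List MStep) : wsum p = p.count .N - p.count .E := by
  induction p with
  | nil => rfl
  | cons s p ih => cases s <;> simp [ih, MStep.hdiff] <;> ring

theorem neg_length_le_wsum (p : List MStep) : -(p.length : ℤ) ≤ wsum p := by
  induction p with
  | nil => rfl
  | cons s p ih => simp only [wsum_cons, length_cons]; push_cast; linarith [s.neg_one_le_hdiff]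

theorem wsum_take_succ_ge (p : List MStep) (j : ℕ) :
    wsum (p.take j) - 1 ≤ wsum (p.take (j + 1)) := by
  rw [take_add_one, wsum_append]
  cases p[j]? with
  | none => simp
  | some s => simp; linarith [s.neg_one_le_hdiff]

theorem length_eq_count_add_count_add_count (p : List MStep) :
    p.length = p.count .N + p.count .E + p.count .D := by
  induction p with
  | nil => rfl
  | cons s p ih => cases s <;> simp [ih] <;> omega

theorem prefix_append_or {α : Type*} {q a b : List α} (h : q <+: a ++ b) :
    q <+: a ∨ ∃ r, q = a ++ r ∧ r <+: b := by
  rcases le_total q.length a.length with hle | hle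
  · exact .inl (prefix_of_prefix_length_le h (prefix_append a b) hle)
  · obtain ⟨r, rfl⟩ := prefix_of_prefix_length_le (prefix_append a b) h hle
    exact .inr ⟨r, rfl, (prefix_append_right_inj a).1 h⟩

theorem IsMotzkin.head_ne_E {s : MStep} {p : List MStep} (h : IsMotzkin (s :: p)) :
    s ≠ .E := by
  rintro rfl
  simpa [MStep.hdiff] using h.2.1 [.E] (by simp)

theorem IsMotzkin.countP_ne_E_pos {p : List MStep} (h : IsMotzkin p) :
    0 < p.countP (· != .E) := by
  obtain ⟨s, p, rfl⟩ := exists_cons_of_ne_nil h.1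
  simp [h.head_ne_E]

theorem Quot.mk_eq_of_reflTransGen {α : Type*} {r : α → α → Prop} {p : α → Prop}
    (hp : ∀ a b, r a b → p a → p b) {a b : α} (hab : ReflTransGen r a b) (ha : p a)
    (hb : p b) :
    Quot.mk (fun x y : Subtype p => r x y) ⟨a, ha⟩ = Quot.mk _ ⟨b, hb⟩ := by
  induction hab using ReflTransGen.head_induction_on with
  | refl => rfl
  | head hac _ ih =>
    exact (Quot.sound (a := (⟨_, ha⟩ : Subtype p)) (b := ⟨_, hp _ _ hac ha⟩) hac).trans
      (ih _)

theorem MCover.perm {P Q : List MStep} (h : MCover P Q) : P ~ Q := by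
  obtain ⟨a, B, C, -, -, rfl, rfl⟩ := h
  simpa only [append_assoc, cons_append, nil_append] using (perm_middle.symm).append_left a

theorem MCover.length_add_count_D_eq {P Q : List MStep} (h : MCover P Q) :
    P.length + P.count .D = Q.length + Q.count .D := by
  rw [h.perm.length_eq, h.perm.count_eq]

def eastFree (p : List MStep) : List MStep := p.filter (· != .E)

theorem MCover.eastFree_eq {P Q : List MStep} (h : MCover P Q) : eastFree P = eastFree Q := by
  obtain ⟨a, B, C, -, -, rfl, rfl⟩ := h
  simp [eastFree, filter_append]

theorem IsMotzkin.of_mcover {P Q : List MStep} (hP : IsMotzkin P) (h : MCover P Q) :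
    IsMotzkin Q := by
  obtain ⟨a, B, C, hB, -, rfl, rfl⟩ := h
  obtain ⟨-, hPpre, hPsum⟩ := hP
  have ha : 1 ≤ wsum a := by
    have := hPpre (a ++ [.E]) ⟨B ++ C, by simp⟩
    simp only [wsum_append, wsum_cons, wsum_nil] at this
    linarith [show MStep.E.hdiff = -1 from rfl]
  refine ⟨by simp, fun q hq => ?_, by simp at hPsum ⊢; linarith⟩
  simp only [append_assoc, singleton_append] at hq
  rcases prefix_append_or hq with hq | ⟨r, rfl, hr⟩
  · exact hPpre q (hq.trans ⟨[.E] ++ B ++ C, by simp⟩)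
  rcases prefix_append_or hr with hr | ⟨r', rfl, hr'⟩
  · simp only [wsum_append]; linarith [hB.2.1 r hr]
  rcases prefix_cons_iff.1 hr' with rfl | ⟨r'', rfl, t, rfl⟩
  · simp only [wsum_append, wsum_nil]; linarith [hB.2.2]
  · have := hPpre (a ++ [.E] ++ B ++ r'') ⟨t, by simp⟩
    simp only [wsum_append, wsum_cons, wsum_nil] at this ⊢
    linarith

def eastInversions : List MStep → ℕ
  | [] => 0
  | .E :: p => p.countP (· != .E) + eastInversions p
  | .N :: p => eastInversions p
  | .D :: p => eastInversions p

theorem eastInversions_append (p q : List MStep) :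
    eastInversions (p ++ q) =
      eastInversions p + eastInversions q + p.count .E * q.countP (· != .E) := by
  induction p with
  | nil => simp [eastInversions]
  | cons s p ih =>
    cases s <;> simp [eastInversions, ih, countP_append]
    ring

theorem eastInversions_move_E (a B C : List MStep) :
    eastInversions (a ++ B ++ .E :: C) + B.countP (· != .E) =
      eastInversions (a ++ .E :: (B ++ C)) := by
  simp [eastInversions_append, eastInversions, countP_append]
  ring

theorem eq_eastFree_append_or_exists_E_cons (p : List MStep) :
    p = eastFree p ++ replicate (p.count .E) .E ∨
      ∃ a s t, p = a ++ .E :: s :: t ∧ s ≠ .E := by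
  induction p with
  | nil => simp [eastFree]
  | cons x p ih =>
    rcases ih with hp | ⟨a, s, t, rfl, hs⟩
    · by_cases hx : x = .E
      · subst hx
        rcases hf : eastFree p with _ | ⟨s, f⟩
        · left
          rw [hf, nil_append] at hp
          rw [hp]
          simp [eastFree]
          rfl
        · right
          have hs : s ≠ .E :=
            bne_iff_ne.1 (mem_filter.1 (hf ▸ mem_cons_self : s ∈ eastFree p)).2
          exact ⟨[], s, f ++ replicate (p.count .E) .E, by nth_rewrite 1 [hp]; rw [hf]; rfl, hs⟩
      · left
        nth_rewrite 1 [hp]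
        simp [eastFree, hx]
    · exact .inr ⟨x :: a, s, t, rfl, hs⟩

theorem exists_isPrimitive_prefix {s : MStep} (hs : s ≠ .E) {t : List MStep}
    (hw : wsum (s :: t) ≤ 0) : ∃ B C, s :: t = B ++ C ∧ IsPrimitive B := by
  set r := s :: t with hr
  have hex : ∃ k, 0 < k ∧ wsum (r.take k) ≤ 0 := ⟨r.length, by simp [hr], by simpa⟩
  obtain ⟨hk0, hkw⟩ := Nat.find_spec hex
  have hklen : Nat.find hex ≤ r.length := Nat.find_min' hex ⟨by simp [hr], by simpa⟩
  have hpos : ∀ j, 0 < j → j < Nat.find hex → 0 < wsum (r.take j) := fun j hj hjk => by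
    simpa [hj] using Nat.find_min hex hjk
  set k := Nat.find hex
  have hzero : wsum (r.take k) = 0 := by
    refine le_antisymm hkw ?_
    obtain ⟨j, hj⟩ : ∃ j, k = j + 1 := ⟨k - 1, by omega⟩
    rw [hj]
    rcases j.eq_zero_or_pos with rfl | hj0
    · simpa [hr] using MStep.hdiff_nonneg hs
    · linarith [wsum_take_succ_ge r j, hpos j hj0 (by omega)]
  have hinner : ∀ q, q <+: r.take k → q ≠ [] → q ≠ r.take k → 0 < wsum q := by
    intro q hq hne hqk
    obtain ⟨hq, hqlen⟩ := prefix_take_iff.1 hq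
    rw [prefix_iff_eq_take.1 hq] at hqk ⊢
    refine hpos _ (length_pos_of_ne_nil hne) (lt_of_le_of_ne hqlen ?_)
    exact fun h => hqk (by rw [h])
  refine ⟨r.take k, r.drop k, (take_append_drop k r).symm,
    ⟨?_, fun q hq => ?_, hzero⟩, hinner⟩
  · simp [hr]
    omega
  · by_cases hne : q = []
    · simp [hne]
    by_cases hqk : q = r.take k
    · rw [hqk, hzero]
    exact (hinner q hq hne hqk).le

theorem IsMotzkin.exists_mcover_lt {a t : List MStep} {s : MStep}
    (hP : IsMotzkin (a ++ .E :: s :: t)) (hs : s ≠ .E) :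
    ∃ Q, MCover (a ++ .E :: s :: t) Q ∧
      eastInversions Q < eastInversions (a ++ .E :: s :: t) := by
  have hw : wsum (s :: t) ≤ 0 := by
    have hpre := hP.2.1 (a ++ [.E]) ⟨s :: t, by simp⟩
    have hsum := hP.2.2
    simp only [wsum_append, wsum_cons, wsum_nil] at hpre hsum ⊢
    linarith
  obtain ⟨B, C, hBC, hB⟩ := exists_isPrimitive_prefix hs hw
  refine ⟨a ++ B ++ .E :: C, ⟨a, B, C, hB.1, hB, by rw [hBC]; simp, by simp⟩, ?_⟩
  have := eastInversions_move_E a B C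
  have := hB.1.countP_ne_E_pos
  rw [hBC]
  omega

def topPath (w : List MStep) : List MStep := w ++ replicate (w.count .N) .E

theorem IsMotzkin.count_E_eq_count_N_eastFree {p : List MStep} (hp : IsMotzkin p) :
    p.count .E = (eastFree p).count .N := by
  have := hp.2.2
  rw [wsum_eq_count_sub_count] at this
  rw [eastFree, count_filter (by decide)]
  omega

theorem IsMotzkin.reflTransGen_topPath {P : List MStep} (hP : IsMotzkin P) :
    ReflTransGen MCover P (topPath (eastFree P)) := by
  induction h : eastInversions P using Nat.strong_induction_on generalizing P with
  | _ m ih =>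
  rcases eq_eastFree_append_or_exists_E_cons P with hsorted | ⟨a, s, t, rfl, hs⟩
  · rw [topPath, ← hP.count_E_eq_count_N_eastFree, ← hsorted]
  · obtain ⟨Q, hPQ, hlt⟩ := hP.exists_mcover_lt hs
    rw [hPQ.eastFree_eq]
    exact .head hPQ (ih _ (h ▸ hlt) (hP.of_mcover hPQ) rfl)

theorem E_notMem_eastFree (p : List MStep) : MStep.E ∉ eastFree p := by
  simp [eastFree]

theorem IsMotzkin.length_eastFree {p : List MStep} {n : ℕ} (hp : IsMotzkin p)
    (hn : p.length + p.count .D = 2 * n) : (eastFree p).length = n := by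
  have hE := hp.count_E_eq_count_N_eastFree
  have hN : (eastFree p).count .N = p.count .N := count_filter (by decide)
  have hD : (eastFree p).count .D = p.count .D := count_filter (by decide)
  rw [length_eq_count_add_count_add_count, count_eq_zero_of_not_mem (E_notMem_eastFree p), hD,
    hN]
  have := length_eq_count_add_count_add_count p
  omega

theorem eastFree_topPath {w : List MStep} (hw : MStep.E ∉ w) : eastFree (topPath w) = w := by
  have hw' : ∀ s ∈ w, (s != .E) = true := fun s hs => bne_iff_ne.2 (by rintro rfl; exact hw hs)
  simp [eastFree, topPath, filter_append, filter_eq_self.2 hw']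

theorem isMotzkin_topPath {w : List MStep} (hne : w ≠ []) (hw : MStep.E ∉ w) :
    IsMotzkin (topPath w) := by
  have hwsum : wsum w = w.count .N := by
    simp [wsum_eq_count_sub_count, count_eq_zero_of_not_mem hw]
  refine ⟨by simp [topPath, hne], fun q hq => ?_, by
    simp [topPath, wsum_eq_count_sub_count, count_replicate, count_eq_zero_of_not_mem hw]⟩
  rcases prefix_append_or hq with hq | ⟨r, rfl, hr⟩
  · rw [wsum_eq_count_sub_count, count_eq_zero_of_not_mem fun h => hw (hq.subset h)]
    simp
  · have hlen : r.length ≤ w.count .N := by simpa using hr.length_le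
    rw [wsum_append, hwsum]
    linarith [neg_length_le_wsum r, (Nat.cast_le (α := ℤ)).2 hlen]

theorem length_add_count_D_topPath {w : List MStep} (hw : MStep.E ∉ w) :
    (topPath w).length + (topPath w).count .D = 2 * w.length := by
  have := length_eq_count_add_count_add_count w
  rw [count_eq_zero_of_not_mem hw] at this
  simp [topPath, count_replicate]
  omega

abbrev SchroederPath (n : ℕ) := {p : List MStep // IsMotzkin p ∧ p.length + p.count .D = 2 * n}

def componentsEquivEastFreeWords (n : ℕ) (hn : 1 ≤ n) :
    Quot (fun P Q : SchroederPath n => MCover P.1 Q.1) ≃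
      {w : List MStep // w.length = n ∧ MStep.E ∉ w} where
  toFun := Quot.lift (fun P => ⟨eastFree P.1, P.2.1.length_eastFree P.2.2, E_notMem_eastFree _⟩)
    fun _ _ h => Subtype.ext h.eastFree_eq
  invFun w := Quot.mk _ ⟨topPath w.1, isMotzkin_topPath (ne_nil_of_length_pos (by omega)) w.2.2,
    by rw [length_add_count_D_topPath w.2.2, w.2.1]⟩
  left_inv := Quot.ind fun P =>
    (Quot.mk_eq_of_reflTransGen
      (fun _ _ h hp => ⟨hp.1.of_mcover h, h.length_add_count_D_eq ▸ hp.2⟩)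
      P.2.1.reflTransGen_topPath P.2 _).symm
  right_inv w := Subtype.ext (eastFree_topPath w.2.2)

def eastFreeWordsEquivVector (n : ℕ) :
    {w : List MStep // w.length = n ∧ MStep.E ∉ w} ≃ List.Vector Bool n where
  toFun w := ⟨w.1.map (· == .D), by simp [w.2.1]⟩
  invFun v := ⟨v.1.map (cond · .D .N), by simp, by simp⟩
  left_inv w := Subtype.ext <| by
    dsimp only
    rw [List.map_map]
    conv_rhs => rw [← map_id w.1]
    exact map_congr_left fun s hs => by cases s <;> first | decide | exact absurd hs w.2.2
  right_inv v := Subtype.ext <| by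
    dsimp only
    rw [List.map_map]
    conv_rhs => rw [← map_id v.1]
    exact map_congr_left fun b _ => by cases b <;> rfl

/-- The number of connected components of the poset
`(≤_S, S_{2n})` of Schröder paths of length `2n` (where diagonal steps count as
length `2`) is `2 ^ n`. -/
theorem card_components_schroeder (n : ℕ) (hn : 1 ≤ n) :
    Nat.card
      (Quot (fun P Q :
          {p : List MStep // IsMotzkin p ∧ p.length + p.count MStep.D = 2 * n} =>
        MCover P.1 Q.1)) = 2 ^ n := by
  rw [Nat.card_congr ((componentsEquivEastFreeWords n hn).trans (eastFreeWordsEquivVector n)),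
    Nat.card_eq_fintype_card, card_vector, Fintype.card_bool]
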